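/- The extreme value density ρ(s) = e^{−s}·Ψ_H(e^{−s}) for cusp excursions on the modular surface has mean ∫_{−∞}^{∞} s·ρ(s) ds = 1 − (12/π²)·ζ(3), where ζ(3) = Σ_{n=1}^∞ n^{−3}. -/

import Mathlib

noncomputable section
open MeasureTheory Filter Topology

/-- The Hall density `Ψ_H` for the gap distribution of the Farey sequence. -/
def PsiH (r : ℝ) : ℝ :=
  if r < 1 then 3 / Real.pi ^ 2
  else if r ≤ 4 then (3 / Real.pi ^ 2) * (-1 + 2 / r + (2 / r) * Real.log r)
  else (3 / Real.pi ^ 2) *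
    (-1 + 2 / r + 2 * Real.sqrt (1 / 4 - 1 / r)
      - (4 / r) * Real.log (1 / 2 + Real.sqrt (1 / 4 - 1 / r)))

section HallAuxSection
open Real Set intervalIntegral

namespace HallAux


lemma abs_log_le_rpow {t : ℝ} (h0 : 0 < t) (h1 : t ≤ 1) :
    |Real.log t| ≤ 2 * t ^ (-(1/2) : ℝ) := by
  rw [abs_of_nonpos (Real.log_nonpos h0.le h1)]
  have h := Real.log_le_rpow_div (x := t⁻¹) (ε := 1/2) (by positivity) (by norm_num)
  rw [Real.log_inv] at h
  have h2 : (t⁻¹) ^ ((1:ℝ)/2) = t ^ (-(1/2):ℝ) := by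
    rw [Real.inv_rpow h0.le, ← Real.rpow_neg h0.le]
  rw [h2] at h
  linarith

lemma integrableOn_abs_log : IntegrableOn (fun t => |Real.log t|) (Ioo (0:ℝ) 1) := by
  have hi : IntegrableOn (fun t : ℝ => 2 * t ^ (-(1/2):ℝ)) (Ioo (0:ℝ) 1) :=
    ((intervalIntegral.integrableOn_Ioo_rpow_iff one_pos).2 (by norm_num)).const_mul 2
  apply hi.mono' (Real.measurable_log.abs.aestronglyMeasurable)
  filter_upwards [ae_restrict_mem measurableSet_Ioo] with t ht
  rw [Real.norm_eq_abs, abs_abs]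
  exact abs_log_le_rpow ht.1 ht.2.le

lemma integrableOn_of_abs_le {f : ℝ → ℝ} {b : ℝ} (hb1 : b ≤ 1)
    (hm : AEStronglyMeasurable f (volume.restrict (Ioo 0 b)))
    (hbd : ∀ t ∈ Ioo (0:ℝ) b, |f t| ≤ 4 * |Real.log t| + 4) :
    IntegrableOn f (Ioo (0:ℝ) b) := by
  have hsub : Ioo (0:ℝ) b ⊆ Ioo 0 1 := Ioo_subset_Ioo le_rfl hb1
  have h1 : IntegrableOn (fun t => 4 * |Real.log t| + 4) (Ioo (0:ℝ) b) :=
    ((integrableOn_abs_log.mono_set hsub).const_mul 4).add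
      (integrableOn_const measure_Ioo_lt_top.ne)
  apply h1.mono' hm
  filter_upwards [ae_restrict_mem measurableSet_Ioo] with t ht
  simpa using hbd t ht

lemma II {f : ℝ → ℝ} {b : ℝ} (hb : 0 ≤ b) (hb1 : b ≤ 1) (hm : Measurable f)
    (hbd : ∀ t ∈ Ioo (0:ℝ) b, |f t| ≤ 4 * |Real.log t| + 4) :
    IntervalIntegrable f volume 0 b := by
  rw [intervalIntegrable_iff_integrableOn_Ioo_of_le hb]
  exact integrableOn_of_abs_le hb1 hm.aestronglyMeasurable hbd

-- elementary log bounds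
lemma neg_log_one_sub_le {t : ℝ} (h0 : 0 ≤ t) (h1 : t < 1) :
    |Real.log (1-t)| ≤ t / (1-t) := by
  have h2 : (0:ℝ) < 1 - t := by linarith
  rw [abs_of_nonpos (Real.log_nonpos (by linarith) (by linarith))]
  have h := Real.log_le_sub_one_of_pos (inv_pos.2 h2)
  rw [Real.log_inv] at h
  have : (1-t)⁻¹ - 1 = t / (1-t) := by field_simp; ring
  linarith [this ▸ h]

lemma abs_log_le_of_half {t : ℝ} (h : 1/2 ≤ t) (h1 : t ≤ 1) : |Real.log t| ≤ (1-t)/t := by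
  have h2 : (0:ℝ) < t := by linarith
  rw [abs_of_nonpos (Real.log_nonpos (by linarith) h1)]
  have h := Real.log_le_sub_one_of_pos (inv_pos.2 h2)
  rw [Real.log_inv] at h
  have : t⁻¹ - 1 = (1-t)/t := by field_simp
  linarith [this ▸ h]

lemma abs_log_one_sub_le_two_mul {t : ℝ} (h0 : 0 ≤ t) (h1 : t ≤ 1/2) :
    |Real.log (1-t)| ≤ 2 * t := by
  have h2 : (0:ℝ) < 1 - t := by linarith
  calc |Real.log (1-t)| ≤ t / (1-t) := neg_log_one_sub_le h0 (by linarith)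
  _ ≤ 2 * t := by rw [div_le_iff₀ h2]; nlinarith

lemma abs_log_one_sub_le_log_two {t : ℝ} (h0 : 0 ≤ t) (h1 : t ≤ 1/2) :
    |Real.log (1-t)| ≤ Real.log 2 := by
  have h2 : (0:ℝ) < 1 - t := by linarith
  rw [abs_of_nonpos (Real.log_nonpos (by linarith) (by linarith))]
  rw [← Real.log_inv]
  apply Real.log_le_log (by positivity)
  rw [inv_le_iff_one_le_mul₀ h2]
  linarith

lemma log_two_lt_one : Real.log 2 < 1 := by
  have := Real.log_two_lt_d9
  linarith



lemma tendsto_mul_log : Tendsto (fun t : ℝ => t * Real.log t) (𝓝[>] (0:ℝ)) (𝓝 0) := by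
  have h := tendsto_log_mul_rpow_nhdsGT_zero one_pos
  apply h.congr'
  filter_upwards [self_mem_nhdsWithin] with x (hx : (0:ℝ) < x)
  rw [Real.rpow_one, mul_comm]

lemma tendsto_right_of_continuousAt {f : ℝ → ℝ} {a : ℝ} (h : ContinuousAt f a) :
    Tendsto f (𝓝[>] a) (𝓝 (f a)) := h.tendsto.mono_left nhdsWithin_le_nhds

lemma tendsto_left_of_continuousAt {f : ℝ → ℝ} {a : ℝ} (h : ContinuousAt f a) :
    Tendsto f (𝓝[<] a) (𝓝 (f a)) := h.tendsto.mono_left nhdsWithin_le_nhds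



lemma log_half : Real.log (1/2 : ℝ) = -Real.log 2 := by
  rw [one_div, Real.log_inv]

lemma mem_ne {x : ℝ} (hx : x ∈ uIcc (0:ℝ) (1/2)) : (1:ℝ) - x ≠ 0 := by
  rw [uIcc_of_le (by norm_num)] at hx
  rcases hx with ⟨h0, h2⟩
  intro h; nlinarith

lemma hd_log_one_sub {x : ℝ} (h1 : (1:ℝ) - x ≠ 0) :
    HasDerivAt (fun t : ℝ => Real.log (1-t)) (-(1-x)⁻¹) x := by
  have := (((hasDerivAt_id x).const_sub 1)).log h1
  simpa [neg_div, div_eq_mul_inv] using this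

lemma contOn_log_one_sub : ContinuousOn (fun t : ℝ => Real.log (1-t)) (uIcc (0:ℝ) (1/2)) :=
  fun x hx => ((hd_log_one_sub (mem_ne hx)).continuousAt).continuousWithinAt

lemma contOn_one_sub : ContinuousOn (fun t : ℝ => 1-t) (uIcc (0:ℝ) (1/2)) := by fun_prop

-- e3
lemma e3 : ∫ t in (0:ℝ)..(1/2), Real.log (1-t)/(1-t) = -(Real.log 2)^2/2 := by
  have h : ∀ x ∈ uIcc (0:ℝ) (1/2), HasDerivAt (fun t => -(Real.log (1-t))^2/2)
      (Real.log (1-x)/(1-x)) x := by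
    intro x hx
    have h1 := mem_ne hx
    have := (((hd_log_one_sub h1).pow 2).neg.div_const 2)
    refine this.congr_deriv ?_
    field_simp
    ring
  rw [integral_eq_sub_of_hasDerivAt h]
  · norm_num [log_half]
  · exact (contOn_log_one_sub.div contOn_one_sub (fun x hx => mem_ne hx)).intervalIntegrable

-- e4
lemma e4 : ∫ t in (0:ℝ)..(1/2), Real.log (1-t)/(1-t)^2 = 1 - 2*Real.log 2 := by
  have h : ∀ x ∈ uIcc (0:ℝ) (1/2), HasDerivAt (fun t => Real.log (1-t)/(1-t) + (1-t)⁻¹)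
      (Real.log (1-x)/(1-x)^2) x := by
    intro x hx
    have h1 := mem_ne hx
    have hd2 : HasDerivAt (fun t : ℝ => (1:ℝ)-t) (-1) x := by
      simpa using ((hasDerivAt_id x).const_sub 1)
    have := ((hd_log_one_sub h1).div hd2 h1).add (hd2.inv h1)
    refine this.congr_deriv ?_
    field_simp
    ring
  rw [integral_eq_sub_of_hasDerivAt h]
  · norm_num [log_half]
    ring
  · apply ContinuousOn.intervalIntegrable
    exact contOn_log_one_sub.div (contOn_one_sub.pow 2) (fun x hx => pow_ne_zero 2 (mem_ne hx))

-- e8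
lemma e8 : ∫ t in (0:ℝ)..(1/2), (Real.log (1-t))^2/(1-t) = (Real.log 2)^3/3 := by
  have h : ∀ x ∈ uIcc (0:ℝ) (1/2), HasDerivAt (fun t => -(Real.log (1-t))^3/3)
      ((Real.log (1-x))^2/(1-x)) x := by
    intro x hx
    have h1 := mem_ne hx
    have := (((hd_log_one_sub h1).pow 3).neg.div_const 3)
    refine this.congr_deriv ?_
    field_simp
    ring
  rw [integral_eq_sub_of_hasDerivAt h]
  · norm_num [log_half]
    ring
  · exact ((contOn_log_one_sub.pow 2).div contOn_one_sub (fun x hx => mem_ne hx)).intervalIntegrable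


-- singular integrals via FTC with limit at 0

lemma e2 : ∫ t in (0:ℝ)..(1/2), Real.log t/(1-t)^2 = -(2*Real.log 2) := by
  have hderiv : ∀ x ∈ Ioo (0:ℝ) 1, HasDerivAt (fun t => t*Real.log t/(1-t) + Real.log (1-t))
      (Real.log x/(1-x)^2) x := by
    intro x hx
    have hx0 : x ≠ 0 := ne_of_gt hx.1
    have h1 : (1:ℝ) - x ≠ 0 := by intro h; nlinarith [hx.2]
    have hd2 : HasDerivAt (fun t : ℝ => (1:ℝ)-t) (-1) x := by
      simpa using ((hasDerivAt_id x).const_sub 1)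
    have hdm : HasDerivAt (fun t : ℝ => t*Real.log t) (1*Real.log x + x*x⁻¹) x :=
      (hasDerivAt_id x).mul (Real.hasDerivAt_log hx0)
    have := (hdm.div hd2 h1).add (hd_log_one_sub h1)
    refine this.congr_deriv ?_
    field_simp
    ring
  have hint : IntervalIntegrable (fun t => Real.log t/(1-t)^2) volume 0 (1/2) := by
    apply II (by norm_num) (by norm_num) (by exact Real.measurable_log.div ((measurable_const.sub measurable_id).pow_const 2))
    intro t ht
    have h1 : (1:ℝ)/2 ≤ (1-t) := by linarith [ht.2]
    have h2 : (1:ℝ)/4 ≤ (1-t)^2 := by nlinarith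
    rw [abs_div, div_le_iff₀ (by positivity)]
    have : |(1-t)^2| = (1-t)^2 := abs_of_pos (by nlinarith)
    rw [this]
    nlinarith [abs_nonneg (Real.log t)]
  have h0 : Tendsto (fun t => t*Real.log t/(1-t) + Real.log (1-t)) (𝓝[>] (0:ℝ)) (𝓝 0) := by
    have h1 : Tendsto (fun t : ℝ => t*Real.log t/(1-t)) (𝓝[>] (0:ℝ)) (𝓝 (0/1)) := by
      apply Tendsto.div tendsto_mul_log
      · simpa using tendsto_right_of_continuousAt (a := 0) (f := fun t : ℝ => 1 - t)
          (Continuous.continuousAt (by fun_prop))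
      · norm_num
    have h2 : Tendsto (fun t : ℝ => Real.log (1-t)) (𝓝[>] (0:ℝ)) (𝓝 (Real.log (1-0))) :=
      tendsto_right_of_continuousAt (a := 0)
        ((Real.continuousAt_log (by norm_num)).comp (Continuous.continuousAt (by fun_prop)))
    have := h1.add h2
    norm_num at this
    exact this
  have hb : Tendsto (fun t => t*Real.log t/(1-t) + Real.log (1-t)) (𝓝[<] (1/2:ℝ))
      (𝓝 ((1/2)*Real.log (1/2)/(1-1/2) + Real.log (1-1/2))) :=
    tendsto_left_of_continuousAt (hderiv (1/2) (by norm_num)).continuousAt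
  rw [integral_eq_sub_of_hasDerivAt_of_tendsto (by norm_num)
    (fun x hx => hderiv x ⟨hx.1, by linarith [hx.2]⟩) hint h0 hb]
  norm_num [log_half]
  ring

lemma squeeze_log_mul {c : ℝ} (hc : 0 ≤ c) {g : ℝ → ℝ}
    (hg : ∀ᶠ t in 𝓝[>] (0:ℝ), ‖g t‖ ≤ c * |t * Real.log t|) :
    Tendsto g (𝓝[>] (0:ℝ)) (𝓝 0) := by
  apply squeeze_zero_norm' hg
  have := (tendsto_mul_log.abs).const_mul c
  norm_num at this
  simpa [abs_mul] using this

lemma mem_Ioo_half_eventually : ∀ᶠ t in 𝓝[>] (0:ℝ), t ∈ Ioo (0:ℝ) (1/2) :=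
  Ioo_mem_nhdsGT_of_mem ⟨le_rfl, by norm_num⟩

-- eb : ∫ (log(1-t)/t - log t/(1-t)) = (log 2)^2
lemma eb : ∫ t in (0:ℝ)..(1/2), (Real.log (1-t)/t - Real.log t/(1-t)) = (Real.log 2)^2 := by
  have hderiv : ∀ x ∈ Ioo (0:ℝ) 1, HasDerivAt (fun t => Real.log t * Real.log (1-t))
      (Real.log (1-x)/x - Real.log x/(1-x)) x := by
    intro x hx
    have hx0 : x ≠ 0 := ne_of_gt hx.1
    have h1 : (1:ℝ) - x ≠ 0 := by intro h; nlinarith [hx.2]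
    have := (Real.hasDerivAt_log hx0).mul (hd_log_one_sub h1)
    refine this.congr_deriv ?_
    field_simp
    ring
  have hint1 : IntervalIntegrable (fun t => Real.log (1-t)/t) volume 0 (1/2) := by
    apply II (by norm_num) (by norm_num) (by exact (Real.measurable_log.comp (measurable_const.sub measurable_id)).div measurable_id)
    intro t ht
    have h2 := abs_log_one_sub_le_two_mul ht.1.le ht.2.le
    rw [abs_div, abs_of_pos ht.1, div_le_iff₀ ht.1]
    nlinarith [abs_nonneg (Real.log t), ht.1]
  have hint2 : IntervalIntegrable (fun t => Real.log t/(1-t)) volume 0 (1/2) := by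
    apply II (by norm_num) (by norm_num) (by exact Real.measurable_log.div (measurable_const.sub measurable_id))
    intro t ht
    have h1 : (1:ℝ)/2 ≤ (1-t) := by linarith [ht.2]
    rw [abs_div, abs_of_pos (show (0:ℝ) < 1-t by linarith), div_le_iff₀ (show (0:ℝ) < 1-t by linarith)]
    nlinarith [abs_nonneg (Real.log t)]
  have h0 : Tendsto (fun t => Real.log t * Real.log (1-t)) (𝓝[>] (0:ℝ)) (𝓝 0) := by
    apply squeeze_log_mul (by norm_num : (0:ℝ) ≤ 2)
    filter_upwards [mem_Ioo_half_eventually] with t ht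
    have h2 := abs_log_one_sub_le_two_mul ht.1.le ht.2.le
    rw [Real.norm_eq_abs, abs_mul, abs_mul]
    calc |Real.log t| * |Real.log (1-t)| ≤ |Real.log t| * (2*t) := by
          exact mul_le_mul_of_nonneg_left h2 (abs_nonneg _)
    _ = 2 * (|t| * |Real.log t|) := by rw [abs_of_pos ht.1]; ring
  have hb : Tendsto (fun t => Real.log t * Real.log (1-t)) (𝓝[<] (1/2:ℝ))
      (𝓝 (Real.log (1/2) * Real.log (1-1/2))) :=
    tendsto_left_of_continuousAt (hderiv (1/2) (by norm_num)).continuousAt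
  rw [integral_eq_sub_of_hasDerivAt_of_tendsto (by norm_num)
    (fun x hx => hderiv x ⟨hx.1, by linarith [hx.2]⟩) (hint1.sub hint2) h0 hb]
  norm_num [log_half]
  ring

-- ec : ∫ ((log(1-t))^2/t - 2*(log t*log(1-t)/(1-t))) = -(log 2)^3
lemma ec : ∫ t in (0:ℝ)..(1/2), ((Real.log (1-t))^2/t - 2*(Real.log t*Real.log (1-t)/(1-t)))
    = -(Real.log 2)^3 := by
  have hderiv : ∀ x ∈ Ioo (0:ℝ) 1, HasDerivAt (fun t => Real.log t * (Real.log (1-t))^2)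
      ((Real.log (1-x))^2/x - 2*(Real.log x*Real.log (1-x)/(1-x))) x := by
    intro x hx
    have hx0 : x ≠ 0 := ne_of_gt hx.1
    have h1 : (1:ℝ) - x ≠ 0 := by intro h; nlinarith [hx.2]
    have := (Real.hasDerivAt_log hx0).mul ((hd_log_one_sub h1).pow 2)
    refine this.congr_deriv ?_
    field_simp
    simp only [Pi.pow_apply]
    ring
  have hint1 : IntervalIntegrable (fun t => (Real.log (1-t))^2/t) volume 0 (1/2) := by
    apply II (by norm_num) (by norm_num) (by exact ((Real.measurable_log.comp (measurable_const.sub measurable_id)).pow_const 2).div measurable_id)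
    intro t ht
    have h2 := abs_log_one_sub_le_two_mul ht.1.le ht.2.le
    have h3 := abs_log_one_sub_le_log_two ht.1.le ht.2.le
    have hl2 := log_two_lt_one
    have hl2' := Real.log_nonneg (by norm_num : (1:ℝ) ≤ 2)
    rw [abs_div, abs_of_pos ht.1, div_le_iff₀ ht.1, abs_pow]
    have : |Real.log (1-t)|^2 ≤ (2*t) * 1 := by
      calc |Real.log (1-t)|^2 = |Real.log (1-t)| * |Real.log (1-t)| := by ring
      _ ≤ (2*t) * 1 := mul_le_mul h2 (h3.trans hl2.le) (abs_nonneg _) (by linarith [ht.1])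
    nlinarith [abs_nonneg (Real.log t), ht.1]
  have hint2 : IntervalIntegrable (fun t => Real.log t*Real.log (1-t)/(1-t)) volume 0 (1/2) := by
    apply II (by norm_num) (by norm_num) (by exact ((Real.measurable_log.mul (Real.measurable_log.comp (measurable_const.sub measurable_id))).div (measurable_const.sub measurable_id)))
    intro t ht
    have h1 : (1:ℝ)/2 ≤ (1-t) := by linarith [ht.2]
    have h3 := abs_log_one_sub_le_log_two ht.1.le ht.2.le
    have hl2 := log_two_lt_one
    rw [abs_div, abs_of_pos (show (0:ℝ) < 1-t by linarith), div_le_iff₀ (show (0:ℝ) < 1-t by linarith), abs_mul]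
    nlinarith [abs_nonneg (Real.log t), abs_nonneg (Real.log (1-t))]
  have h0 : Tendsto (fun t => Real.log t * (Real.log (1-t))^2) (𝓝[>] (0:ℝ)) (𝓝 0) := by
    apply squeeze_log_mul (by norm_num : (0:ℝ) ≤ 2)
    filter_upwards [mem_Ioo_half_eventually] with t ht
    have h2 := abs_log_one_sub_le_two_mul ht.1.le ht.2.le
    have h3 := abs_log_one_sub_le_log_two ht.1.le ht.2.le
    have hl2 := log_two_lt_one
    rw [Real.norm_eq_abs, abs_mul, abs_pow]
    have hsq : |Real.log (1-t)|^2 ≤ 2*t := by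
      calc |Real.log (1-t)|^2 = |Real.log (1-t)| * |Real.log (1-t)| := by ring
      _ ≤ (2*t) * 1 := mul_le_mul h2 (h3.trans hl2.le) (abs_nonneg _) (by linarith [ht.1])
      _ = 2*t := by ring
    calc |Real.log t| * |Real.log (1-t)|^2 ≤ |Real.log t| * (2*t) :=
          mul_le_mul_of_nonneg_left hsq (abs_nonneg _)
    _ = 2 * |t * Real.log t| := by rw [abs_mul, abs_of_pos ht.1]; ring
  have hb : Tendsto (fun t => Real.log t * (Real.log (1-t))^2) (𝓝[<] (1/2:ℝ))
      (𝓝 (Real.log (1/2) * (Real.log (1-1/2))^2)) :=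
    tendsto_left_of_continuousAt (hderiv (1/2) (by norm_num)).continuousAt
  rw [integral_eq_sub_of_hasDerivAt_of_tendsto (by norm_num)
    (fun x hx => hderiv x ⟨hx.1, by linarith [hx.2]⟩) (hint1.sub (hint2.const_mul 2)) h0 hb]
  norm_num [log_half]
  ring

-- elog : ∫ t in 0..1, log t = -1
lemma elog : ∫ t in (0:ℝ)..1, Real.log t = -1 := by
  have hderiv : ∀ x ∈ Ioo (0:ℝ) 1, HasDerivAt (fun t => t*Real.log t - t) (Real.log x) x := by
    intro x hx
    have hx0 : x ≠ 0 := ne_of_gt hx.1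
    have := ((hasDerivAt_id x).mul (Real.hasDerivAt_log hx0)).sub (hasDerivAt_id x)
    refine this.congr_deriv ?_
    field_simp
    simp only [id_eq]
    ring
  have hint : IntervalIntegrable Real.log volume 0 1 := by
    apply II (by norm_num) (by norm_num) Real.measurable_log
    intro t ht
    nlinarith [abs_nonneg (Real.log t)]
  have h0 : Tendsto (fun t : ℝ => t*Real.log t - t) (𝓝[>] (0:ℝ)) (𝓝 0) := by
    have := tendsto_mul_log.sub (tendsto_right_of_continuousAt (f := fun t : ℝ => t) (by fun_prop))
    norm_num at this
    exact this
  have hb : Tendsto (fun t : ℝ => t*Real.log t - t) (𝓝[<] (1:ℝ)) (𝓝 (1*Real.log 1 - 1)) := by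
    apply tendsto_left_of_continuousAt
    have : ContinuousAt (fun t : ℝ => t * Real.log t) 1 := Real.continuous_mul_log.continuousAt
    exact this.sub (by fun_prop)
  rw [integral_eq_sub_of_hasDerivAt_of_tendsto (by norm_num) hderiv hint h0 hb]
  norm_num

-- en : ∫ t in 0..1, (-log t) * t^n = 1/(n+1)^2
lemma en (n : ℕ) : ∫ t in (0:ℝ)..1, (-Real.log t) * t^n = 1/((n:ℝ)+1)^2 := by
  have hn1 : ((n:ℝ)+1) ≠ 0 := by positivity
  have hderiv : ∀ x ∈ Ioo (0:ℝ) 1, HasDerivAt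
      (fun t => t^(n+1)/((n:ℝ)+1)^2 - t^(n+1)*Real.log t/((n:ℝ)+1))
      ((-Real.log x) * x^n) x := by
    intro x hx
    have hx0 : x ≠ 0 := ne_of_gt hx.1
    have hp : HasDerivAt (fun t : ℝ => t^(n+1)) (((n:ℝ)+1)*x^n) x := by
      have := hasDerivAt_pow (n+1) x
      simpa [Nat.add_sub_cancel] using this
    have := (hp.div_const (((n:ℝ)+1)^2)).sub ((hp.mul (Real.hasDerivAt_log hx0)).div_const ((n:ℝ)+1))
    refine this.congr_deriv ?_
    have hxn : x^(n+1) = x^n * x := pow_succ x n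
    field_simp
    ring
  have hint : IntervalIntegrable (fun t => (-Real.log t) * t^n) volume 0 1 := by
    apply II (by norm_num) (by norm_num) (by exact ((Real.measurable_log.neg).mul (measurable_id.pow_const n)))
    intro t ht
    have h1 : t^n ≤ 1 := pow_le_one₀ ht.1.le ht.2.le
    have h2 : (0:ℝ) ≤ t^n := pow_nonneg ht.1.le n
    rw [abs_mul, abs_neg, abs_of_nonneg h2]
    nlinarith [abs_nonneg (Real.log t)]
  have h0 : Tendsto (fun t : ℝ => t^(n+1)/((n:ℝ)+1)^2 - t^(n+1)*Real.log t/((n:ℝ)+1))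
      (𝓝[>] (0:ℝ)) (𝓝 0) := by
    have hA : Tendsto (fun t : ℝ => t^(n+1)/((n:ℝ)+1)^2) (𝓝[>] (0:ℝ)) (𝓝 0) := by
      have : Tendsto (fun t : ℝ => t^(n+1)/((n:ℝ)+1)^2) (𝓝 (0:ℝ)) (𝓝 (0^(n+1)/((n:ℝ)+1)^2)) :=
        Continuous.tendsto (by fun_prop) 0
      rw [zero_pow (Nat.succ_ne_zero n), zero_div] at this
      exact this.mono_left nhdsWithin_le_nhds
    have hB : Tendsto (fun t : ℝ => t^(n+1)*Real.log t/((n:ℝ)+1)) (𝓝[>] (0:ℝ)) (𝓝 0) := by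
      apply squeeze_log_mul (by norm_num : (0:ℝ) ≤ 1)
      filter_upwards [mem_Ioo_half_eventually] with t ht
      have h1 : t^n ≤ 1 := pow_le_one₀ ht.1.le (by linarith [ht.2])
      have h2 : (0:ℝ) ≤ t^n := pow_nonneg ht.1.le n
      have hd : (1:ℝ) ≤ (n:ℝ)+1 := by push_cast; linarith [Nat.cast_nonneg (α := ℝ) n]
      rw [Real.norm_eq_abs, abs_div, abs_mul, abs_pow, pow_succ, abs_mul]
      rw [div_le_iff₀ (by positivity : (0:ℝ) < |(n:ℝ)+1|)]
      have h3 : |t|^n ≤ 1 := by rw [abs_of_pos ht.1]; exact h1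
      have h4 : |(n:ℝ)+1| = (n:ℝ)+1 := abs_of_pos (by positivity)
      rw [h4, one_mul]
      nlinarith [mul_le_mul_of_nonneg_right h3 (mul_nonneg (abs_nonneg t) (abs_nonneg (Real.log t))),
        mul_nonneg (abs_nonneg t) (abs_nonneg (Real.log t))]
    have := hA.sub hB
    norm_num at this
    exact this
  have hb : Tendsto (fun t : ℝ => t^(n+1)/((n:ℝ)+1)^2 - t^(n+1)*Real.log t/((n:ℝ)+1))
      (𝓝[<] (1:ℝ)) (𝓝 ((1:ℝ)^(n+1)/((n:ℝ)+1)^2 - (1:ℝ)^(n+1)*Real.log 1/((n:ℝ)+1))) := by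
    apply tendsto_left_of_continuousAt
    have hc : ContinuousAt Real.log 1 := Real.continuousAt_log (by norm_num)
    fun_prop
  rw [integral_eq_sub_of_hasDerivAt_of_tendsto (by norm_num) hderiv hint h0 hb]
  norm_num

-- series facts
lemma hasSum_inv_sq : HasSum (fun n : ℕ => 1/((n:ℝ)+1)^2) (Real.pi^2/6) := by
  have h := hasSum_zeta_two
  rw [← hasSum_nat_add_iff' 1] at h
  simp only [Finset.sum_range_one, Nat.cast_zero] at h
  norm_num at h
  simpa only [one_div] using h

lemma summable_inv_cube : Summable (fun n : ℕ => 1/((n:ℝ)+1)^3) := by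
  have h : Summable (fun n : ℕ => 1 / (n:ℝ)^3) := summable_one_div_nat_pow.2 (by norm_num)
  have := (summable_nat_add_iff 1).2 h
  apply this.congr
  intro n
  push_cast
  ring

-- integrability on (0,1) of the two dilog integrands
lemma int_f1_01 : IntegrableOn (fun t => Real.log t/(1-t)) (Ioo (0:ℝ) 1) := by
  refine integrableOn_of_abs_le le_rfl ?_ ?_
  · exact (Real.measurable_log.div (measurable_const.sub measurable_id)).aestronglyMeasurable
  intro t ht
  rcases le_or_gt t (1/2) with h | h
  · have h1 : (1:ℝ)/2 ≤ 1-t := by linarith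
    rw [abs_div, abs_of_pos (show (0:ℝ) < 1-t by linarith), div_le_iff₀ (show (0:ℝ) < 1-t by linarith)]
    nlinarith [abs_nonneg (Real.log t)]
  · have h2 := abs_log_le_of_half h.le ht.2.le
    rw [abs_div, abs_of_pos (show (0:ℝ) < 1-t by linarith [ht.2]), div_le_iff₀ (show (0:ℝ) < 1-t by linarith [ht.2])]
    have h3 : |Real.log t| * t ≤ 1 - t := by
      have := mul_le_mul_of_nonneg_right h2 ht.1.le
      rwa [div_mul_cancel₀ _ (ne_of_gt ht.1)] at this
    nlinarith [abs_nonneg (Real.log t), ht.1, ht.2]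

lemma int_f5_01 : IntegrableOn (fun t => Real.log t * Real.log (1-t)/t) (Ioo (0:ℝ) 1) := by
  refine integrableOn_of_abs_le le_rfl ?_ ?_
  · exact ((Real.measurable_log.mul (Real.measurable_log.comp (measurable_const.sub measurable_id))).div
      measurable_id).aestronglyMeasurable
  intro t ht
  have hM := neg_log_one_sub_le ht.1.le ht.2
  -- |L M / t| = |L| |M| / t ≤ |L| (t/(1-t))/t = |L|/(1-t)
  have key : |Real.log t * Real.log (1-t)/t| ≤ |Real.log t|/(1-t) := by
    rw [abs_div, abs_mul, abs_of_pos ht.1, div_le_div_iff₀ ht.1 (show (0:ℝ) < 1-t by linarith [ht.2])]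
    calc |Real.log t| * |Real.log (1-t)| * (1-t) ≤ |Real.log t| * (t/(1-t)) * (1-t) := by
          apply mul_le_mul_of_nonneg_right (mul_le_mul_of_nonneg_left hM (abs_nonneg _))
          linarith [ht.2]
    _ = |Real.log t| * t := by
          have h1t : (1:ℝ)-t ≠ 0 := by intro hh; nlinarith [ht.2]
          field_simp
  refine key.trans ?_
  rcases le_or_gt t (1/2) with h | h
  · have h1 : (1:ℝ)/2 ≤ 1-t := by linarith
    rw [div_le_iff₀ (show (0:ℝ) < 1-t by linarith)]
    nlinarith [abs_nonneg (Real.log t)]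
  · have h2 := abs_log_le_of_half h.le ht.2.le
    rw [div_le_iff₀ (show (0:ℝ) < 1-t by linarith [ht.2])]
    have h3 : |Real.log t| * t ≤ 1 - t := by
      have := mul_le_mul_of_nonneg_right h2 ht.1.le
      rwa [div_mul_cancel₀ _ (ne_of_gt ht.1)] at this
    nlinarith [abs_nonneg (Real.log t), ht.1, ht.2]

lemma en_Ioo (n : ℕ) : ∫ t in Ioo (0:ℝ) 1, (-Real.log t) * t^n = 1/((n:ℝ)+1)^2 := by
  rw [← MeasureTheory.integral_Ioc_eq_integral_Ioo, ← intervalIntegral.integral_of_le (by norm_num : (0:ℝ) ≤ 1)]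
  exact en n

lemma int_en (n : ℕ) : IntegrableOn (fun t => (-Real.log t) * t^n) (Ioo (0:ℝ) 1) := by
  refine integrableOn_of_abs_le le_rfl ?_ ?_
  · exact ((Real.measurable_log.neg).mul (measurable_id.pow_const n)).aestronglyMeasurable
  intro t ht
  have h1 : t^n ≤ 1 := pow_le_one₀ ht.1.le ht.2.le
  have h2 : (0:ℝ) ≤ t^n := pow_nonneg ht.1.le n
  rw [abs_mul, abs_neg, abs_of_nonneg h2]
  nlinarith [abs_nonneg (Real.log t)]

-- ∫_0^1 log t/(1-t) = -π²/6
lemma hz2 : ∫ t in Ioo (0:ℝ) 1, Real.log t/(1-t) = -(Real.pi^2/6) := by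
  have hpt : ∀ t ∈ Ioo (0:ℝ) 1, (∑' n : ℕ, (-Real.log t) * t^n) = (-Real.log t)/(1-t) := by
    intro t ht
    rw [tsum_mul_left, tsum_geometric_of_lt_one ht.1.le ht.2, div_eq_mul_inv]
  have hkey : ∑' n : ℕ, ∫ t in Ioo (0:ℝ) 1, (-Real.log t) * t^n
      = ∫ t in Ioo (0:ℝ) 1, ∑' n : ℕ, (-Real.log t) * t^n := by
    apply MeasureTheory.integral_tsum_of_summable_integral_norm
    · exact fun n => int_en n
    · apply Summable.congr (hasSum_inv_sq.summable)
      intro n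
      rw [← en_Ioo n]
      apply MeasureTheory.integral_congr_ae
      filter_upwards [ae_restrict_mem measurableSet_Ioo] with t ht
      rw [Real.norm_eq_abs, abs_mul, abs_neg, abs_of_nonpos (Real.log_nonpos ht.1.le ht.2.le),
        abs_of_nonneg (pow_nonneg ht.1.le n)]
  have h2 : ∫ t in Ioo (0:ℝ) 1, ∑' n : ℕ, (-Real.log t) * t^n
      = ∫ t in Ioo (0:ℝ) 1, (-Real.log t)/(1-t) := by
    apply MeasureTheory.setIntegral_congr_fun measurableSet_Ioo
    intro t ht
    exact hpt t ht
  have h3 : ∑' n : ℕ, ∫ t in Ioo (0:ℝ) 1, (-Real.log t) * t^n = Real.pi^2/6 := by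
    rw [tsum_congr (fun n => en_Ioo n)]
    exact hasSum_inv_sq.tsum_eq
  have h4 : ∫ t in Ioo (0:ℝ) 1, (-Real.log t)/(1-t) = Real.pi^2/6 := by
    rw [← h2, ← hkey, h3]
  have : ∫ t in Ioo (0:ℝ) 1, Real.log t/(1-t) = -∫ t in Ioo (0:ℝ) 1, (-Real.log t)/(1-t) := by
    rw [← MeasureTheory.integral_neg]
    apply MeasureTheory.setIntegral_congr_fun measurableSet_Ioo
    intro t _
    simp [neg_div]
  rw [this, h4]

-- ∫_0^1 log t * log(1-t)/t = ζ(3)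
lemma hz3 : ∫ t in Ioo (0:ℝ) 1, Real.log t * Real.log (1-t)/t = ∑' n : ℕ, 1/((n:ℝ)+1)^3 := by
  have hpt : ∀ t ∈ Ioo (0:ℝ) 1, (∑' n : ℕ, ((-Real.log t) * t^n)/((n:ℝ)+1))
      = Real.log t * Real.log (1-t)/t := by
    intro t ht
    have habs : |t| < 1 := by rw [abs_of_pos ht.1]; exact ht.2
    have hs := Real.hasSum_pow_div_log_of_abs_lt_one habs
    have hs2 := hs.mul_left ((-Real.log t)/t)
    have ht0 : t ≠ 0 := ne_of_gt ht.1
    have heq : ∀ n : ℕ, (-Real.log t)/t * (t^(n+1)/((n:ℕ)+1 : ℝ)) = ((-Real.log t) * t^n)/((n:ℝ)+1) := by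
      intro n
      have : t^(n+1) = t * t^n := by rw [pow_succ]; ring
      rw [this]
      field_simp
    rw [funext heq] at hs2
    rw [hs2.tsum_eq]
    field_simp
  have hkey : ∑' n : ℕ, ∫ t in Ioo (0:ℝ) 1, ((-Real.log t) * t^n)/((n:ℝ)+1)
      = ∫ t in Ioo (0:ℝ) 1, ∑' n : ℕ, ((-Real.log t) * t^n)/((n:ℝ)+1) := by
    apply MeasureTheory.integral_tsum_of_summable_integral_norm
    · exact fun n => (int_en n).div_const _
    · apply Summable.congr summable_inv_cube
      intro n
      have hval : ∫ t in Ioo (0:ℝ) 1, ((-Real.log t) * t^n)/((n:ℝ)+1) = 1/((n:ℝ)+1)^3 := by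
        rw [MeasureTheory.integral_div, en_Ioo n]
        have : ((n:ℝ)+1) ≠ 0 := by positivity
        field_simp
      rw [← hval]
      apply MeasureTheory.integral_congr_ae
      filter_upwards [ae_restrict_mem measurableSet_Ioo] with t ht
      rw [Real.norm_eq_abs, abs_div, abs_mul, abs_neg, abs_of_nonpos (Real.log_nonpos ht.1.le ht.2.le),
        abs_of_nonneg (pow_nonneg ht.1.le n), abs_of_pos (show (0:ℝ) < (n:ℝ)+1 by positivity)]
  have h3 : ∑' n : ℕ, ∫ t in Ioo (0:ℝ) 1, ((-Real.log t) * t^n)/((n:ℝ)+1) = ∑' n : ℕ, 1/((n:ℝ)+1)^3 := by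
    apply tsum_congr
    intro n
    rw [MeasureTheory.integral_div, en_Ioo n]
    have : ((n:ℝ)+1) ≠ 0 := by positivity
    field_simp
  rw [← h3, hkey]
  apply MeasureTheory.setIntegral_congr_fun measurableSet_Ioo
  intro t ht
  exact (hpt t ht).symm

-- standalone interval integrability on [0,1/2]
lemma i_f1 : IntervalIntegrable (fun t => Real.log t/(1-t)) volume 0 (1/2) := by
  apply II (by norm_num) (by norm_num) (by exact Real.measurable_log.div (measurable_const.sub measurable_id))
  intro t ht
  have h1 : (1:ℝ)/2 ≤ (1-t) := by linarith [ht.2]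
  rw [abs_div, abs_of_pos (show (0:ℝ) < 1-t by linarith), div_le_iff₀ (show (0:ℝ) < 1-t by linarith)]
  nlinarith [abs_nonneg (Real.log t)]

lemma i_Mt : IntervalIntegrable (fun t => Real.log (1-t)/t) volume 0 (1/2) := by
  apply II (by norm_num) (by norm_num)
    (by exact (Real.measurable_log.comp (measurable_const.sub measurable_id)).div measurable_id)
  intro t ht
  have h2 := abs_log_one_sub_le_two_mul ht.1.le ht.2.le
  rw [abs_div, abs_of_pos ht.1, div_le_iff₀ ht.1]
  nlinarith [abs_nonneg (Real.log t), ht.1]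

lemma i_f5 : IntervalIntegrable (fun t => Real.log t*Real.log (1-t)/t) volume 0 (1/2) := by
  apply II (by norm_num) (by norm_num)
    (by exact (Real.measurable_log.mul (Real.measurable_log.comp (measurable_const.sub measurable_id))).div measurable_id)
  intro t ht
  have h2 := abs_log_one_sub_le_two_mul ht.1.le ht.2.le
  rw [abs_div, abs_of_pos ht.1, div_le_iff₀ ht.1, abs_mul]
  nlinarith [abs_nonneg (Real.log t), abs_nonneg (Real.log (1-t)), ht.1]

lemma i_f6 : IntervalIntegrable (fun t => Real.log t*Real.log (1-t)/(1-t)) volume 0 (1/2) := by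
  apply II (by norm_num) (by norm_num)
    (by exact (Real.measurable_log.mul (Real.measurable_log.comp (measurable_const.sub measurable_id))).div (measurable_const.sub measurable_id))
  intro t ht
  have h1 : (1:ℝ)/2 ≤ (1-t) := by linarith [ht.2]
  have h3 := abs_log_one_sub_le_log_two ht.1.le ht.2.le
  have hl2 := log_two_lt_one
  rw [abs_div, abs_of_pos (show (0:ℝ) < 1-t by linarith), div_le_iff₀ (show (0:ℝ) < 1-t by linarith), abs_mul]
  nlinarith [abs_nonneg (Real.log t), abs_nonneg (Real.log (1-t))]

lemma i_f7 : IntervalIntegrable (fun t => (Real.log (1-t))^2/t) volume 0 (1/2) := by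
  apply II (by norm_num) (by norm_num)
    (by exact ((Real.measurable_log.comp (measurable_const.sub measurable_id)).pow_const 2).div measurable_id)
  intro t ht
  have h2 := abs_log_one_sub_le_two_mul ht.1.le ht.2.le
  have h3 := abs_log_one_sub_le_log_two ht.1.le ht.2.le
  have hl2 := log_two_lt_one
  rw [abs_div, abs_of_pos ht.1, div_le_iff₀ ht.1, abs_pow]
  nlinarith [abs_nonneg (Real.log t), abs_nonneg (Real.log (1-t)), ht.1]

lemma i_f2 : IntervalIntegrable (fun t => Real.log t/(1-t)^2) volume 0 (1/2) := by
  apply II (by norm_num) (by norm_num)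
    (by exact Real.measurable_log.div ((measurable_const.sub measurable_id).pow_const 2))
  intro t ht
  have h1 : (1:ℝ)/2 ≤ (1-t) := by linarith [ht.2]
  have h2 : (1:ℝ)/4 ≤ (1-t)^2 := by nlinarith
  rw [abs_div, div_le_iff₀ (by positivity)]
  have : |(1-t)^2| = (1-t)^2 := abs_of_pos (by nlinarith)
  rw [this]
  nlinarith [abs_nonneg (Real.log t)]

lemma i_f1_01 : IntervalIntegrable (fun t => Real.log t/(1-t)) volume 0 1 := by
  rw [intervalIntegrable_iff_integrableOn_Ioo_of_le (by norm_num)]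
  exact int_f1_01

lemma i_f5_01 : IntervalIntegrable (fun t => Real.log t*Real.log (1-t)/t) volume 0 1 := by
  rw [intervalIntegrable_iff_integrableOn_Ioo_of_le (by norm_num)]
  exact int_f5_01

-- e1
lemma e1 : ∫ t in (0:ℝ)..(1/2), Real.log t/(1-t) = -(Real.pi^2/12) - (Real.log 2)^2/2 := by
  have h01 : ∫ t in (0:ℝ)..1, Real.log t/(1-t) = -(Real.pi^2/6) := by
    rw [intervalIntegral.integral_of_le (by norm_num : (0:ℝ) ≤ 1),
      MeasureTheory.integral_Ioc_eq_integral_Ioo]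
    exact hz2
  have hadj : (∫ t in (0:ℝ)..(1/2), Real.log t/(1-t)) + ∫ t in (1/2:ℝ)..1, Real.log t/(1-t)
      = ∫ t in (0:ℝ)..1, Real.log t/(1-t) :=
    intervalIntegral.integral_add_adjacent_intervals i_f1
      (i_f1_01.mono_set (by rw [uIcc_of_le (by norm_num : (1:ℝ)/2 ≤ 1), uIcc_of_le (by norm_num : (0:ℝ) ≤ 1)]; exact Icc_subset_Icc (by norm_num) le_rfl))
  have hrefl : ∫ t in (1/2:ℝ)..1, Real.log t/(1-t) = ∫ t in (0:ℝ)..(1/2), Real.log (1-t)/t := by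
    have h := intervalIntegral.integral_comp_sub_left (a := (0:ℝ)) (b := 1/2)
      (fun x => Real.log x/(1-x)) 1
    norm_num at h
    rw [← h]
  have hsub : (∫ t in (0:ℝ)..(1/2), Real.log (1-t)/t) - ∫ t in (0:ℝ)..(1/2), Real.log t/(1-t)
      = (Real.log 2)^2 := by
    rw [← intervalIntegral.integral_sub i_Mt i_f1]
    exact eb
  linarith

-- e6
lemma e6 : ∫ t in (0:ℝ)..(1/2), Real.log t*Real.log (1-t)/(1-t)
    = (∑' n : ℕ, 1/((n:ℝ)+1)^3) - ∫ t in (0:ℝ)..(1/2), Real.log t*Real.log (1-t)/t := by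
  have h01 : ∫ t in (0:ℝ)..1, Real.log t*Real.log (1-t)/t = ∑' n : ℕ, 1/((n:ℝ)+1)^3 := by
    rw [intervalIntegral.integral_of_le (by norm_num : (0:ℝ) ≤ 1),
      MeasureTheory.integral_Ioc_eq_integral_Ioo]
    exact hz3
  have hadj : (∫ t in (0:ℝ)..(1/2), Real.log t*Real.log (1-t)/t)
      + ∫ t in (1/2:ℝ)..1, Real.log t*Real.log (1-t)/t
      = ∫ t in (0:ℝ)..1, Real.log t*Real.log (1-t)/t :=
    intervalIntegral.integral_add_adjacent_intervals i_f5
      (i_f5_01.mono_set (by rw [uIcc_of_le (by norm_num : (1:ℝ)/2 ≤ 1), uIcc_of_le (by norm_num : (0:ℝ) ≤ 1)]; exact Icc_subset_Icc (by norm_num) le_rfl))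
  have hrefl : ∫ t in (1/2:ℝ)..1, Real.log t*Real.log (1-t)/t
      = ∫ t in (0:ℝ)..(1/2), Real.log t*Real.log (1-t)/(1-t) := by
    have h := intervalIntegral.integral_comp_sub_left (a := (0:ℝ)) (b := 1/2)
      (fun x => Real.log x*Real.log (1-x)/x) 1
    norm_num at h
    rw [← h]
    apply intervalIntegral.integral_congr
    intro x _
    simp only [sub_sub_cancel]
    ring
  linarith

-- e7
lemma e7 : ∫ t in (0:ℝ)..(1/2), (Real.log (1-t))^2/t
    = -(Real.log 2)^3 + 2*∫ t in (0:ℝ)..(1/2), Real.log t*Real.log (1-t)/(1-t) := by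
  have h := ec
  have hsub : (∫ t in (0:ℝ)..(1/2), (Real.log (1-t))^2/t)
      - ∫ t in (0:ℝ)..(1/2), 2*(Real.log t*Real.log (1-t)/(1-t))
      = -(Real.log 2)^3 := by
    rw [← intervalIntegral.integral_sub i_f7 (i_f6.const_mul 2)]
    exact ec
  rw [intervalIntegral.integral_const_mul] at hsub
  linarith

-- interval integrability of the continuous pieces f3, f4, f8
lemma i_f3 : IntervalIntegrable (fun t => Real.log (1-t)/(1-t)) volume 0 (1/2) :=
  (contOn_log_one_sub.div contOn_one_sub (fun x hx => mem_ne hx)).intervalIntegrable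

lemma i_f4 : IntervalIntegrable (fun t => Real.log (1-t)/(1-t)^2) volume 0 (1/2) :=
  (contOn_log_one_sub.div (contOn_one_sub.pow 2)
    (fun x hx => pow_ne_zero 2 (mem_ne hx))).intervalIntegrable

lemma i_f8 : IntervalIntegrable (fun t => (Real.log (1-t))^2/(1-t)) volume 0 (1/2) :=
  ((contOn_log_one_sub.pow 2).div contOn_one_sub (fun x hx => mem_ne hx)).intervalIntegrable

-- the combination appearing after change of variables
def combo (t : ℝ) : ℝ :=
  4*(Real.log t/(1-t)) - 2*(Real.log t/(1-t)^2) + 4*(Real.log (1-t)/(1-t))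
    - 2*(Real.log (1-t)/(1-t)^2) + 4*(Real.log t*Real.log (1-t)/t)
    - 4*(Real.log t*Real.log (1-t)/(1-t)) + 4*((Real.log (1-t))^2/t)
    - 4*((Real.log (1-t))^2/(1-t))

lemma i_comboL : IntervalIntegrable (fun t =>
    4*(Real.log t/(1-t)) - 2*(Real.log t/(1-t)^2) + 4*(Real.log (1-t)/(1-t))
    - 2*(Real.log (1-t)/(1-t)^2) + 4*(Real.log t*Real.log (1-t)/t)
    - 4*(Real.log t*Real.log (1-t)/(1-t)) + 4*((Real.log (1-t))^2/t)) volume 0 (1/2) :=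
  ((((((i_f1.const_mul 4).sub (i_f2.const_mul 2)).add (i_f3.const_mul 4)).sub
    (i_f4.const_mul 2)).add (i_f5.const_mul 4)).sub (i_f6.const_mul 4)).add (i_f7.const_mul 4)

lemma i_combo : IntervalIntegrable combo volume 0 (1/2) := i_comboL.sub (i_f8.const_mul 4)

lemma combo_val : ∫ t in (0:ℝ)..(1/2), combo t
    = 4*(∑' n : ℕ, 1/((n:ℝ)+1)^3) - Real.pi^2/3 - 2 + 8*Real.log 2 - 4*(Real.log 2)^2
      - (16/3)*(Real.log 2)^3 := by
  have iC2 := (i_f1.const_mul 4).sub (i_f2.const_mul 2)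
  have iC3 := iC2.add (i_f3.const_mul 4)
  have iC4 := iC3.sub (i_f4.const_mul 2)
  have iC5 := iC4.add (i_f5.const_mul 4)
  have iC6 := iC5.sub (i_f6.const_mul 4)
  have iC7 := iC6.add (i_f7.const_mul 4)
  unfold combo
  rw [intervalIntegral.integral_sub iC7 (i_f8.const_mul 4),
    intervalIntegral.integral_add iC6 (i_f7.const_mul 4),
    intervalIntegral.integral_sub iC5 (i_f6.const_mul 4),
    intervalIntegral.integral_add iC4 (i_f5.const_mul 4),
    intervalIntegral.integral_sub iC3 (i_f4.const_mul 2),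
    intervalIntegral.integral_add iC2 (i_f3.const_mul 4),
    intervalIntegral.integral_sub (i_f1.const_mul 4) (i_f2.const_mul 2)]
  simp only [intervalIntegral.integral_const_mul]
  rw [e1, e2, e3, e4, e7, e6, e8]
  ring

-- change of variables for the region (4, ∞)
lemma inj_phi : InjOn (fun t : ℝ => (t*(1-t))⁻¹) (Ioo (0:ℝ) (1/2)) := by
  intro a ha b hb h
  have ha0 : 0 < a := ha.1
  have hb0 : 0 < b := hb.1
  have ha1 : a < 1/2 := ha.2
  have hb1 : b < 1/2 := hb.2
  simp only at h
  have hane : a*(1-a) ≠ 0 := by nlinarith [mul_pos ha0 (show (0:ℝ) < 1-a by linarith)]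
  have hbne : b*(1-b) ≠ 0 := by nlinarith [mul_pos hb0 (show (0:ℝ) < 1-b by linarith)]
  have heq : a*(1-a) = b*(1-b) := by
    have := congrArg (fun y : ℝ => y⁻¹) h
    simpa [inv_inv] using this
  by_contra hne
  rcases lt_or_gt_of_ne hne with hlt | hlt
  · nlinarith
  · nlinarith

lemma deriv_phi {x : ℝ} (hx : x ∈ Ioo (0:ℝ) (1/2)) :
    HasDerivAt (fun t : ℝ => (t*(1-t))⁻¹) ((2*x-1)/(x*(1-x))^2) x := by
  have hx0 : 0 < x := hx.1
  have hx1 : x < 1/2 := hx.2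
  have hne : x*(1-x) ≠ 0 := by
    have : 0 < x*(1-x) := by nlinarith
    exact ne_of_gt this
  have hu : HasDerivAt (fun t : ℝ => t*(1-t)) (1*(1-x) + x*(0-1)) x :=
    (hasDerivAt_id x).mul ((hasDerivAt_const x 1).sub (hasDerivAt_id x))
  have := hu.inv hne
  refine this.congr_deriv ?_
  field_simp
  ring

lemma image_phi : (fun t : ℝ => (t*(1-t))⁻¹) '' (Ioo (0:ℝ) (1/2)) = Ioi (4:ℝ) := by
  ext r
  constructor
  · rintro ⟨t, ht, rfl⟩
    have ht0 : 0 < t := ht.1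
    have ht1 : t < 1/2 := ht.2
    have hpos : 0 < t*(1-t) := by nlinarith
    have hlt : t*(1-t) < 1/4 := by nlinarith
    rw [mem_Ioi, show (4:ℝ) = ((1:ℝ)/4)⁻¹ by norm_num]
    exact inv_strictAnti₀ hpos hlt
  · intro hr
    rw [mem_Ioi] at hr
    have hr0 : (0:ℝ) < r := by linarith
    have harg : 0 < 1/4 - 1/r := by
      have : 1/r < 1/4 := by
        rw [div_lt_div_iff₀ hr0 (by norm_num : (0:ℝ) < 4)]
        linarith
      linarith
    set x := Real.sqrt (1/4 - 1/r) with hxdef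
    have hx2 : x^2 = 1/4 - 1/r := Real.sq_sqrt harg.le
    have hx0 : 0 < x := Real.sqrt_pos.2 harg
    have hxlt : x < 1/2 := by nlinarith [hx2, hx0, hr0, one_div_pos.2 hr0]
    refine ⟨1/2 - x, ⟨by linarith, by linarith⟩, ?_⟩
    have hval : (1/2 - x)*(1-(1/2-x)) = 1/r := by nlinarith [hx2]
    show ((1/2 - x)*(1-(1/2-x)))⁻¹ = r
    rw [hval, one_div, inv_inv]

lemma psi_inner {t : ℝ} (ht : t ∈ Ioo (0:ℝ) (1/2)) :
    |(2*t-1)/(t*(1-t))^2| * (Real.log ((t*(1-t))⁻¹) * PsiH ((t*(1-t))⁻¹))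
      = (3/Real.pi^2) * combo t := by
  have ht0 : 0 < t := ht.1
  have ht1 : t < 1/2 := ht.2
  have h1t : 0 < 1-t := by linarith
  have hpos : 0 < t*(1-t) := by nlinarith
  have hlt : t*(1-t) < 1/4 := by nlinarith
  have h4 : (4:ℝ) < (t*(1-t))⁻¹ := by
    rw [show (4:ℝ) = ((1:ℝ)/4)⁻¹ by norm_num]
    exact inv_strictAnti₀ hpos hlt
  unfold PsiH
  rw [if_neg (by push_neg; linarith), if_neg (by push_neg; exact h4)]
  have hinv : 1/((t*(1-t))⁻¹) = t*(1-t) := by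
    rw [one_div, inv_inv]
  rw [hinv]
  have hdiv2 : 2/((t*(1-t))⁻¹) = 2*(t*(1-t)) := by
    field_simp
  have hdiv4 : 4/((t*(1-t))⁻¹) = 4*(t*(1-t)) := by
    field_simp
  rw [hdiv2, hdiv4]
  rw [show (1:ℝ)/4 - t*(1-t) = (1/2-t)^2 by ring,
    Real.sqrt_sq (by linarith : (0:ℝ) ≤ 1/2-t),
    show (1:ℝ)/2 + (1/2-t) = 1-t by ring,
    Real.log_inv, Real.log_mul (ne_of_gt ht0) (ne_of_gt h1t)]
  rw [abs_div, abs_of_neg (show 2*t-1 < 0 by linarith),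
    abs_of_pos (show (0:ℝ) < (t*(1-t))^2 by positivity)]
  unfold combo
  have hpi : Real.pi ≠ 0 := Real.pi_ne_zero
  field_simp
  ring

lemma hasDerivWithin_phi : ∀ x ∈ Ioo (0:ℝ) (1/2),
    HasDerivWithinAt (fun t : ℝ => (t*(1-t))⁻¹) ((2*x-1)/(x*(1-x))^2) (Ioo (0:ℝ) (1/2)) x :=
  fun x hx => (deriv_phi hx).hasDerivWithinAt

lemma cov3 : ∫ r in Ioi (4:ℝ), Real.log r * PsiH r
    = ∫ t in Ioo (0:ℝ) (1/2), |(2*t-1)/(t*(1-t))^2| * (Real.log ((t*(1-t))⁻¹) * PsiH ((t*(1-t))⁻¹)) := by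
  have h := MeasureTheory.integral_image_eq_integral_abs_deriv_smul measurableSet_Ioo
    hasDerivWithin_phi inj_phi (fun r => Real.log r * PsiH r)
  rw [image_phi] at h
  simpa [smul_eq_mul] using h

lemma I3val : ∫ r in Ioi (4:ℝ), Real.log r * PsiH r
    = (3/Real.pi^2) * (4*(∑' n : ℕ, 1/((n:ℝ)+1)^3) - Real.pi^2/3 - 2 + 8*Real.log 2
      - 4*(Real.log 2)^2 - (16/3)*(Real.log 2)^3) := by
  rw [cov3]
  have hcongr : ∫ t in Ioo (0:ℝ) (1/2),
      |(2*t-1)/(t*(1-t))^2| * (Real.log ((t*(1-t))⁻¹) * PsiH ((t*(1-t))⁻¹))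
      = ∫ t in Ioo (0:ℝ) (1/2), (3/Real.pi^2) * combo t :=
    MeasureTheory.setIntegral_congr_fun measurableSet_Ioo (fun t ht => psi_inner ht)
  rw [hcongr, ← MeasureTheory.integral_Ioc_eq_integral_Ioo,
    ← intervalIntegral.integral_of_le (by norm_num : (0:ℝ) ≤ 1/2),
    intervalIntegral.integral_const_mul, combo_val]

lemma int_I3 : IntegrableOn (fun r => Real.log r * PsiH r) (Ioi (4:ℝ)) := by
  rw [← image_phi]
  rw [MeasureTheory.integrableOn_image_iff_integrableOn_abs_deriv_smul measurableSet_Ioo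
    hasDerivWithin_phi inj_phi]
  have hi : IntegrableOn (fun t => (3/Real.pi^2) * combo t) (Ioo (0:ℝ) (1/2)) := by
    have := (i_combo.const_mul (3/Real.pi^2))
    rwa [intervalIntegrable_iff_integrableOn_Ioo_of_le (by norm_num : (0:ℝ) ≤ 1/2)] at this
  apply hi.congr_fun ?_ measurableSet_Ioo
  intro t ht
  simp only [smul_eq_mul]
  exact (psi_inner ht).symm

-- region (0,1]
lemma i_log : IntervalIntegrable Real.log volume 0 1 := by
  apply II (by norm_num) (by norm_num) Real.measurable_log
  intro t ht
  nlinarith [abs_nonneg (Real.log t)]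

lemma psi_eq1 : ∀ r ∈ Ioc (0:ℝ) 1, Real.log r * PsiH r = (3/Real.pi^2) * Real.log r := by
  intro r hr
  unfold PsiH
  by_cases hr1 : r < 1
  · rw [if_pos hr1]; ring
  · have : r = 1 := le_antisymm hr.2 (not_lt.1 hr1)
    subst this
    simp [Real.log_one]

lemma I1val : ∫ r in Ioc (0:ℝ) 1, Real.log r * PsiH r = (3/Real.pi^2) * (-1) := by
  rw [MeasureTheory.setIntegral_congr_fun measurableSet_Ioc psi_eq1,
    ← intervalIntegral.integral_of_le (by norm_num : (0:ℝ) ≤ 1),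
    intervalIntegral.integral_const_mul, elog]

lemma int_I1 : IntegrableOn (fun r => Real.log r * PsiH r) (Ioc (0:ℝ) 1) := by
  have hg : IntegrableOn (fun r => (3/Real.pi^2) * Real.log r) (Ioc (0:ℝ) 1) := by
    have := i_log.const_mul (3/Real.pi^2)
    rwa [intervalIntegrable_iff, uIoc_of_le (by norm_num : (0:ℝ) ≤ 1)] at this
  apply hg.congr_fun ?_ measurableSet_Ioc
  intro r hr
  exact (psi_eq1 r hr).symm

-- region (1,4]
lemma psi_eq2 : ∀ r ∈ Ioc (1:ℝ) 4, Real.log r * PsiH r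
    = (3/Real.pi^2)*(-Real.log r + 2*Real.log r/r + 2*(Real.log r)^2/r) := by
  intro r hr
  unfold PsiH
  rw [if_neg (not_lt.2 hr.1.le), if_pos hr.2]
  ring

lemma contOn_g2 : ContinuousOn
    (fun r : ℝ => (3/Real.pi^2)*(-Real.log r + 2*Real.log r/r + 2*(Real.log r)^2/r))
    (uIcc (1:ℝ) 4) := by
  intro x hx
  rw [uIcc_of_le (by norm_num : (1:ℝ) ≤ 4)] at hx
  have hx0 : x ≠ 0 := by intro h; rw [h] at hx; exact absurd hx.1 (by norm_num)
  have hl := Real.continuousAt_log hx0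
  exact (continuousAt_const.mul (((hl.neg).add ((continuousAt_const.mul hl).div
    continuousAt_id hx0)).add ((continuousAt_const.mul (hl.pow 2)).div
    continuousAt_id hx0))).continuousWithinAt

lemma log_four : Real.log 4 = 2*Real.log 2 := by
  rw [show (4:ℝ) = 2^2 by norm_num, Real.log_pow]
  push_cast
  ring

lemma I2val : ∫ r in Ioc (1:ℝ) 4, Real.log r * PsiH r
    = (3/Real.pi^2)*(3 - 8*Real.log 2 + 4*(Real.log 2)^2 + (16/3)*(Real.log 2)^3) := by
  rw [MeasureTheory.setIntegral_congr_fun measurableSet_Ioc psi_eq2,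
    ← intervalIntegral.integral_of_le (by norm_num : (1:ℝ) ≤ 4)]
  have hderiv : ∀ x ∈ uIcc (1:ℝ) 4, HasDerivAt
      (fun r => (3/Real.pi^2)*(-(r*Real.log r - r) + (Real.log r)^2 + (2/3)*(Real.log r)^3))
      ((3/Real.pi^2)*(-Real.log x + 2*Real.log x/x + 2*(Real.log x)^2/x)) x := by
    intro x hx
    rw [uIcc_of_le (by norm_num : (1:ℝ) ≤ 4)] at hx
    have hx0 : (0:ℝ) < x := lt_of_lt_of_le one_pos hx.1
    have hlog := Real.hasDerivAt_log (ne_of_gt hx0)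
    have hxl : HasDerivAt (fun r : ℝ => r*Real.log r) (1*Real.log x + x*x⁻¹) x :=
      (hasDerivAt_id x).mul hlog
    have H := (((hxl.sub (hasDerivAt_id x)).neg.add ((hlog.pow 2).add
      ((hlog.pow 3).const_mul (2/3)))).const_mul (3/Real.pi^2))
    have hxne := ne_of_gt hx0
    refine (H.congr_deriv ?_).congr_of_eventuallyEq (Filter.Eventually.of_forall fun y => ?_)
    · field_simp
      ring
    · simp only [Pi.add_apply, Pi.neg_apply, Pi.sub_apply, Pi.pow_apply, id_eq]
      ring
  rw [intervalIntegral.integral_eq_sub_of_hasDerivAt hderiv contOn_g2.intervalIntegrable]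
  rw [log_four, Real.log_one]
  ring

lemma int_I2 : IntegrableOn (fun r => Real.log r * PsiH r) (Ioc (1:ℝ) 4) := by
  have hg : IntegrableOn
      (fun r : ℝ => (3/Real.pi^2)*(-Real.log r + 2*Real.log r/r + 2*(Real.log r)^2/r))
      (Ioc (1:ℝ) 4) := by
    have h2 : IntervalIntegrable
        (fun r : ℝ => (3/Real.pi^2)*(-Real.log r + 2*Real.log r/r + 2*(Real.log r)^2/r))
        volume 1 4 := contOn_g2.intervalIntegrable
    rwa [intervalIntegrable_iff, uIoc_of_le (by norm_num : (1:ℝ) ≤ 4)] at h2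
  apply hg.congr_fun ?_ measurableSet_Ioc
  intro r hr
  exact (psi_eq2 r hr).symm

-- total over (0,∞)
lemma total : ∫ r in Ioi (0:ℝ), Real.log r * PsiH r
    = (12/Real.pi^2)*(∑' n : ℕ, 1/((n:ℝ)+1)^3) - 1 := by
  have hu1 : Ioc (0:ℝ) 1 ∪ Ioc (1:ℝ) 4 = Ioc (0:ℝ) 4 :=
    Ioc_union_Ioc_eq_Ioc (by norm_num) (by norm_num)
  have hu2 : Ioc (0:ℝ) 4 ∪ Ioi (4:ℝ) = Ioi (0:ℝ) := Ioc_union_Ioi_eq_Ioi (by norm_num)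
  have hs1 : ∫ r in Ioc (0:ℝ) 4, Real.log r * PsiH r
      = (∫ r in Ioc (0:ℝ) 1, Real.log r * PsiH r) + ∫ r in Ioc (1:ℝ) 4, Real.log r * PsiH r := by
    rw [← hu1]
    exact MeasureTheory.setIntegral_union (Set.Ioc_disjoint_Ioc_of_le le_rfl) measurableSet_Ioc int_I1 int_I2
  have hs2 : ∫ r in Ioi (0:ℝ), Real.log r * PsiH r
      = (∫ r in Ioc (0:ℝ) 4, Real.log r * PsiH r) + ∫ r in Ioi (4:ℝ), Real.log r * PsiH r := by
    rw [← hu2]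
    have hint04 : IntegrableOn (fun r => Real.log r * PsiH r) (Ioc (0:ℝ) 4) := by
      rw [← hu1]
      exact int_I1.union int_I2
    exact MeasureTheory.setIntegral_union Set.Ioc_disjoint_Ioi_same measurableSet_Ioi hint04 int_I3
  rw [hs2, hs1, I1val, I2val, I3val]
  have hpi : Real.pi ≠ 0 := Real.pi_ne_zero
  field_simp
  ring

end HallAux
end HallAuxSection

noncomputable section
open MeasureTheory Filter Topology


/-- The mean of the extreme value density `ρ(s) = e^{-s} Ψ_H(e^{-s})` equals
`1 - (12/π²) ζ(3)`. -/
theorem statement18 :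
    (∫ s : ℝ, s * (Real.exp (-s) * PsiH (Real.exp (-s))))
      = 1 - (12 / Real.pi ^ 2) * ∑' n : ℕ, ((n : ℝ) + 1)⁻¹ ^ 3 := by
  have himg : (fun s : ℝ => Real.exp (-s)) '' (Set.univ : Set ℝ) = Set.Ioi (0:ℝ) := by
    ext x
    simp only [Set.image_univ, Set.mem_range, Set.mem_Ioi]
    constructor
    · rintro ⟨y, rfl⟩; exact Real.exp_pos _
    · intro hx; exact ⟨-Real.log x, by rw [neg_neg, Real.exp_log hx]⟩
  have hder : ∀ x ∈ (Set.univ : Set ℝ), HasDerivWithinAt (fun s : ℝ => Real.exp (-s))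
      (-Real.exp (-x)) Set.univ x := by
    intro x _
    have h := (hasDerivAt_neg x).exp
    have h2 : HasDerivAt (fun s : ℝ => Real.exp (-s)) (-Real.exp (-x)) x := by
      convert h using 1
      ring
    exact h2.hasDerivWithinAt
  have hinj : Set.InjOn (fun s : ℝ => Real.exp (-s)) Set.univ := by
    intro a _ b _ h
    have h2 : -a = -b := Real.exp_injective h
    linarith [neg_inj.mp h2]
  have hcov := MeasureTheory.integral_image_eq_integral_abs_deriv_smul MeasurableSet.univ hder hinj
      (fun r => Real.log r * PsiH r)
  rw [himg, MeasureTheory.Measure.restrict_univ] at hcov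
  have hfun : (fun x : ℝ => |(-Real.exp (-x))| • (Real.log (Real.exp (-x)) * PsiH (Real.exp (-x))))
      = fun x : ℝ => -(x * (Real.exp (-x) * PsiH (Real.exp (-x)))) := by
    funext x
    rw [smul_eq_mul, abs_neg, abs_of_pos (Real.exp_pos _), Real.log_exp]
    ring
  rw [hfun, MeasureTheory.integral_neg] at hcov
  have hz : (∑' n : ℕ, ((n:ℝ)+1)⁻¹^3) = ∑' n : ℕ, 1/((n:ℝ)+1)^3 := by
    apply tsum_congr
    intro n
    rw [inv_pow, one_div]
  rw [hz]
  have hB : (∫ s : ℝ, s * (Real.exp (-s) * PsiH (Real.exp (-s))))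
      = -(∫ r in Set.Ioi (0:ℝ), Real.log r * PsiH r) := by linarith [hcov]
  rw [hB, HallAux.total]
  ring
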